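/- arXiv:1409.6005 — 2 statements merged into one kernel-verified Lean document; each statement's English description precedes it below -/
import Mathlib

section
/- For any natural number p ≥ 1, the configuration space B(S¹, p) of unordered subsets of cardinality p in the circle S¹ is the total space of a locally trivial fiber bundle over S¹ whose fiber is homeomorphic to ℝ^(p-1). -/
/-- The ordered configuration space of `p` points in `M`. -/
def OConf (M : Type) [TopologicalSpace M] (p : ℕ) : Type :=
  {f : Fin p → M // Function.Injective f}

instance (M : Type) [TopologicalSpace M] (p : ℕ) : TopologicalSpace (OConf M p) :=
  inferInstanceAs (TopologicalSpace {f : Fin p → M // Function.Injective f})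

/-- Two ordered configurations are identified iff they differ by a permutation. -/
def confSetoid (M : Type) [TopologicalSpace M] (p : ℕ) : Setoid (OConf M p) where
  r f g := ∃ σ : Equiv.Perm (Fin p), f.1 = g.1 ∘ σ
  iseqv := by
    refine ⟨fun f => ⟨1, ?_⟩, fun {f g} h => ?_, fun {f g h} h₁ h₂ => ?_⟩
    · funext i; simp
    · obtain ⟨σ, hσ⟩ := h
      exact ⟨σ⁻¹, by funext i; simp [hσ]⟩
    · obtain ⟨σ, hσ⟩ := h₁
      obtain ⟨τ, hτ⟩ := h₂
      exact ⟨τ * σ, by funext i; simp [hσ, hτ, Function.comp]⟩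

/-- The configuration space `B(M, p)` of unordered subsets of cardinality `p` in `M`. -/
def UConf (M : Type) [TopologicalSpace M] (p : ℕ) : Type :=
  Quotient (confSetoid M p)

instance (M : Type) [TopologicalSpace M] (p : ℕ) : TopologicalSpace (UConf M p) :=
  instTopologicalSpaceQuotient

/-!
The projection sends a configuration to the product of its points. Remove a point `exp t` from
the circle. A configuration whose product is `exp s` with `s ∈ (t, t + 2π)` has exactly one
listing by angles `θ₀ < ⋯ < θₙ < θ₀ + 2π` with `∑ θᵢ = s`. It exists because moving the first
angle to the end, one turn further on, adds `2π` to the sum. It is unique because the integer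
corrections between two such listings differ pairwise by at most one and sum to zero. These
tuples are parametrized by their sum and their consecutive gaps, and the gaps range over an open
simplex, which is homeomorphic to `ℝⁿ`. Since the quotient map of the configuration space is
open, this parametrization is a homeomorphism onto the preimage of the punctured circle.
-/

noncomputable section

open Real Set Function Topology

lemma Bundle.Trivialization.exists_baseSet_eq_of_homeomorph {Z B F : Type*} [TopologicalSpace Z]
    [TopologicalSpace B] [TopologicalSpace F] [Nonempty F] {proj : Z → B} (hproj : Continuous proj)
    {U : Set B} (hU : IsOpen U) (hne : U.Nonempty) (h : proj ⁻¹' U ≃ₜ U × F)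
    (hh : ∀ z, (h z).1 = proj z) : ∃ e : Trivialization F proj, e.baseSet = U := by
  let e : Trivialization F fun z : proj ⁻¹' U => (⟨proj z, z.2⟩ : U) :=
    { toOpenPartialHomeomorph := h.toOpenPartialHomeomorph
      baseSet := univ
      open_baseSet := isOpen_univ
      source_eq := by simp
      target_eq := by simp
      proj_toFun := fun z _ => Subtype.ext (hh z) }
  refine ⟨(e.codExtend hU hne).domExtend (hU.preimage hproj), ?_⟩
  rw [Bundle.Trivialization.domExtend_baseSet]
  exact (e.codExtend_baseSet hU hne).trans (Subtype.coe_image_univ U)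

lemma Int.eq_zero_of_abs_mul_lt {R : Type*} [Field R] [LinearOrder R] [IsStrictOrderedRing R]
    {m : ℤ} {c : R} (hc : 0 < c) (h : |m * c| < c) : m = 0 := by
  rw [abs_mul, abs_of_pos hc] at h
  have : |(m : R)| < 1 := (mul_lt_iff_lt_one_left hc).mp h
  exact Int.abs_lt_one_iff.mp (by exact_mod_cast this)

lemma Int.eq_zero_of_sum_eq_zero_of_lt_add_two {ι : Type*} [Fintype ι] {k : ι → ℤ}
    (hsum : ∑ i, k i = 0) (hk : ∀ i j, k i < k j + 2) (i : ι) : k i = 0 := by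
  by_contra hne
  rcases lt_or_gt_of_ne hne with hneg | hpos
  · have : ∑ j, k j < 0 :=
      Finset.sum_neg' (fun j _ => by linarith [hk j i]) ⟨i, Finset.mem_univ _, hneg⟩
    omega
  · have : 0 < ∑ j, k j :=
      Finset.sum_pos' (fun j _ => by linarith [hk i j]) ⟨i, Finset.mem_univ _, hpos⟩
    omega

lemma Circle.exp_sum {ι : Type*} (s : Finset ι) (f : ι → ℝ) :
    Circle.exp (∑ i ∈ s, f i) = ∏ i ∈ s, Circle.exp (f i) :=
  map_sum Circle.expHom f s

def Circle.arcHomeomorph (t : ℝ) : Ioo t (t + 2 * π) ≃ₜ ({Circle.exp t}ᶜ : Set Circle) :=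
  have : Fact (0 < 2 * π) := ⟨two_pi_pos⟩
  let e := (AddCircle.openPartialHomeomorphCoe (2 * π) t).transHomeomorph
    AddCircle.homeomorphCircle'
  (Homeomorph.setCongr (by simp [e])).trans <|
    e.toHomeomorphSourceTarget.trans <| Homeomorph.setCongr <| by
      ext x
      simpa [e, AddCircle.homeomorphCircle'_apply_mk] using
        not_congr (AddCircle.homeomorphCircle'.symm_apply_eq (y := x) (x := t))

lemma Circle.coe_arcHomeomorph (t : ℝ) (x : Ioo t (t + 2 * π)) :
    (Circle.arcHomeomorph t x : Circle) = Circle.exp x :=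
  rfl

section OpenSimplex

def openSimplex (ι : Type*) [Fintype ι] (c : ℝ) : Set (ι → ℝ) :=
  {d | (∀ j, 0 < d j) ∧ ∑ j, d j < c}

variable {ι : Type*} [Fintype ι] {c : ℝ}

lemma isOpen_openSimplex : IsOpen (openSimplex ι c) := by
  simp only [openSimplex, ofPred_and, ofPred_forall]
  exact (isOpen_iInter_of_finite fun j => isOpen_lt continuous_const (continuous_apply j)).inter
    (isOpen_lt (by fun_prop) continuous_const)

/-- The softmax of `(y, 0)`, scaled by `c`, with its last coordinate dropped. -/
def homeomorphOpenSimplex (hc : 0 < c) : (ι → ℝ) ≃ₜ openSimplex ι c where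
  toFun y := ⟨fun j => c * Real.exp (y j) / (1 + ∑ l, Real.exp (y l)), by
    have hS : 0 < 1 + ∑ l, Real.exp (y l) := by positivity
    refine ⟨fun j => by positivity, ?_⟩
    rw [← Finset.sum_div, ← Finset.mul_sum, div_lt_iff₀ hS]
    linarith⟩
  invFun d := fun j => Real.log (d.1 j / (c - ∑ l, d.1 l))
  left_inv y := by
    have hS : 0 < 1 + ∑ l, Real.exp (y l) := by positivity
    have hrest : c - ∑ l, c * Real.exp (y l) / (1 + ∑ l, Real.exp (y l)) =
        c / (1 + ∑ l, Real.exp (y l)) := by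
      rw [← Finset.sum_div, ← Finset.mul_sum]
      field_simp
      ring
    funext j
    simp only [hrest]
    rw [div_div_div_cancel_right₀ hS.ne', mul_div_cancel_left₀ _ hc.ne', Real.log_exp]
  right_inv d := by
    obtain ⟨d, hpos, hsum⟩ := d
    have hr : 0 < c - ∑ l, d l := sub_pos.mpr hsum
    have hexp (l : ι) : Real.exp (Real.log (d l / (c - ∑ l, d l))) = d l / (c - ∑ l, d l) :=
      Real.exp_log (div_pos (hpos l) hr)
    have hS : 1 + ∑ l, d l / (c - ∑ l, d l) = c / (c - ∑ l, d l) := by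
      rw [← Finset.sum_div]
      field_simp
      ring
    apply Subtype.ext
    funext j
    simp only [hexp, hS]
    field_simp
  continuous_toFun := by
    apply Continuous.subtype_mk
    exact continuous_pi fun j => Continuous.div (by fun_prop) (by fun_prop)
      fun y => (by positivity : (0 : ℝ) < 1 + ∑ l, Real.exp (y l)).ne'
  continuous_invFun := by
    refine continuous_pi fun j => Continuous.log
      (Continuous.div ((continuous_apply j).comp continuous_subtype_val) (by fun_prop)
        fun d => (sub_pos.mpr d.2.2).ne') fun d => ?_
    exact (div_pos (d.2.1 j) (sub_pos.mpr d.2.2)).ne'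

end OpenSimplex

namespace OConf

variable {M : Type} [TopologicalSpace M] {p : ℕ}

def permute (σ : Equiv.Perm (Fin p)) (f : OConf M p) : OConf M p :=
  ⟨f.1 ∘ σ, f.2.comp σ.injective⟩

lemma continuous_permute (σ : Equiv.Perm (Fin p)) : Continuous (permute (M := M) σ) := by
  apply Continuous.subtype_mk
  exact continuous_pi fun i => (continuous_apply (σ i)).comp continuous_subtype_val

lemma isOpenMap_quotient_mk : IsOpenMap (Quotient.mk (confSetoid M p)) := by
  intro O hO
  have hsat : Quotient.mk (confSetoid M p) ⁻¹' (Quotient.mk _ '' O) = ⋃ σ, permute σ ⁻¹' O := by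
    ext f
    simp only [mem_preimage, mem_image, mem_iUnion]
    constructor
    · rintro ⟨g, hg, hgf⟩
      obtain ⟨σ, hσ⟩ := Quotient.exact hgf
      exact ⟨σ, by rwa [show permute σ f = g from Subtype.ext hσ.symm]⟩
    · rintro ⟨σ, hσ⟩
      exact ⟨_, hσ, Quotient.sound ⟨σ, rfl⟩⟩
  exact isOpen_coinduced.mpr
    (hsat ▸ isOpen_iUnion fun σ => hO.preimage (continuous_permute σ))

end OConf

namespace UConf

variable {M : Type} [TopologicalSpace M] [CommMonoid M] {p : ℕ}

def prodPoints : UConf M p → M :=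
  Quotient.lift (fun f => ∏ i, f.1 i) fun f g ⟨σ, hσ⟩ => by
    simp only [hσ, comp_apply, Equiv.prod_comp σ g.1]

lemma continuous_prodPoints [ContinuousMul M] : Continuous (prodPoints : UConf M p → M) :=
  continuous_quot_lift _ <| continuous_finsetProd _ fun i _ =>
    (continuous_apply i).comp continuous_subtype_val

end UConf

def InOneTurn {n : ℕ} (θ : Fin (n + 1) → ℝ) : Prop :=
  StrictMono θ ∧ θ (Fin.last n) < θ 0 + 2 * π

/-- Moves the first angle of a tuple to the end, one turn further on. -/
def rotateTurn {n : ℕ} (θ : Fin (n + 1) → ℝ) (i : Fin (n + 1)) : ℝ :=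
  θ (i + 1) + if i = Fin.last n then 2 * π else 0

section RotateTurn

variable {n : ℕ}

lemma sum_rotateTurn (θ : Fin (n + 1) → ℝ) : ∑ i, rotateTurn θ i = ∑ i, θ i + 2 * π := by
  simp only [rotateTurn, Finset.sum_add_distrib, Finset.sum_ite_eq', Finset.mem_univ, if_true]
  rw [← Equiv.sum_comp (finRotate (n + 1)) θ]
  simp [finRotate_apply]

lemma exp_comp_rotateTurn (θ : Fin (n + 1) → ℝ) :
    Circle.exp ∘ rotateTurn θ = Circle.exp ∘ θ ∘ finRotate (n + 1) := by
  funext i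
  simp only [rotateTurn, comp_apply, finRotate_apply]
  split_ifs <;> simp

lemma rotateTurn_castSucc (θ : Fin (n + 1) → ℝ) (i : Fin n) :
    rotateTurn θ i.castSucc = θ i.succ := by
  simp [rotateTurn, Fin.coeSucc_eq_succ, (Fin.castSucc_lt_last i).ne]

lemma rotateTurn_last (θ : Fin (n + 1) → ℝ) : rotateTurn θ (Fin.last n) = θ 0 + 2 * π := by
  simp [rotateTurn]

end RotateTurn

namespace InOneTurn

variable {n : ℕ} {θ θ' : Fin (n + 1) → ℝ}

lemma sub_lt (h : InOneTurn θ) (i j : Fin (n + 1)) : θ i - θ j < 2 * π := by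
  have := h.1.monotone (Fin.le_last i)
  have := h.1.monotone (Fin.zero_le j)
  linarith [h.2]

lemma injective_exp (h : InOneTurn θ) : Injective (Circle.exp ∘ θ) := by
  intro i j hij
  obtain ⟨m, hm⟩ := Circle.exp_eq_exp.mp hij
  have hm0 : m = 0 := Int.eq_zero_of_abs_mul_lt two_pi_pos <| by
    simpa [hm] using abs_sub_lt_iff.mpr ⟨h.sub_lt i j, h.sub_lt j i⟩
  exact h.1.injective (by simpa [hm0] using hm)

lemma eq_of_exp_comp_eq (h : InOneTurn θ) (h' : InOneTurn θ')
    (hsum : |∑ i, θ' i - ∑ i, θ i| < 2 * π) (σ : Equiv.Perm (Fin (n + 1)))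
    (hσ : Circle.exp ∘ θ' = Circle.exp ∘ θ ∘ σ) : θ' = θ := by
  choose k hk using fun i => Circle.exp_eq_exp.mp (congrFun hσ i)
  have hsum_k : ∑ i, k i = 0 := by
    refine Int.eq_zero_of_abs_mul_lt two_pi_pos ?_
    have : ∑ i, θ' i - ∑ i, θ i = (∑ i, k i : ℤ) * (2 * π) := by
      simp only [hk, Finset.sum_add_distrib, comp_apply, Equiv.sum_comp σ θ, Int.cast_sum,
        Finset.sum_mul]
      ring
    rwa [← this]
  have hk_lt (i j) : k i < k j + 2 := by
    have : ((k i : ℝ) - k j) * (2 * π) < 2 * (2 * π) := by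
      have := h'.sub_lt i j
      have := h.sub_lt (σ j) (σ i)
      simp only [comp_apply] at hk
      nlinarith [hk i, hk j]
    have : (k i : ℝ) - k j < 2 := lt_of_mul_lt_mul_right this two_pi_pos.le
    exact_mod_cast (by linarith : (k i : ℝ) < k j + 2)
  have hθ' : θ' = θ ∘ σ := funext fun i => by
    simpa [Int.eq_zero_of_sum_eq_zero_of_lt_add_two hsum_k hk_lt i] using hk i
  rw [← h'.1.range_inj h.1, hθ', range_comp, σ.range_eq_univ, image_univ]

lemma add_const (h : InOneTurn θ) (c : ℝ) : InOneTurn (θ · + c) :=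
  ⟨fun _ _ hij => by simpa using h.1 hij, by linarith [h.2]⟩

lemma lt_rotateTurn (h : InOneTurn θ) (i : Fin (n + 1)) : θ i < rotateTurn θ i := by
  rw [rotateTurn]
  split_ifs with hi
  · subst hi
    rw [Fin.last_add_one]
    exact h.2
  · simpa using h.1 (Fin.lt_add_one_iff.mpr (lt_of_le_of_ne (Fin.le_last i) hi))

lemma rotate (h : InOneTurn θ) : InOneTurn (rotateTurn θ) := by
  refine ⟨Fin.strictMono_iff_lt_succ.mpr fun i => ?_, ?_⟩
  · rw [rotateTurn_castSucc]
    exact h.lt_rotateTurn i.succ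
  · rw [rotateTurn_last]
    linarith [h.lt_rotateTurn 0]

lemma exists_sum_eq_add_nat_turns (h : InOneTurn θ) (m : ℕ) :
    ∃ θ', InOneTurn θ' ∧ ∑ i, θ' i = ∑ i, θ i + m * (2 * π) ∧
      ∃ σ : Equiv.Perm (Fin (n + 1)), Circle.exp ∘ θ' = Circle.exp ∘ θ ∘ σ := by
  induction m with
  | zero => exact ⟨θ, h, by simp, 1, rfl⟩
  | succ m ih =>
    obtain ⟨θ', h', hsum, σ, hσ⟩ := ih
    refine ⟨rotateTurn θ', h'.rotate, ?_, (finRotate (n + 1)).trans σ, ?_⟩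
    · rw [sum_rotateTurn, hsum]
      push_cast
      ring
    · rw [exp_comp_rotateTurn, ← comp_assoc, hσ]
      rfl

/-- Shifting every angle back by `N = |m|` turns first makes the number of rotations needed
nonnegative. -/
lemma exists_sum_eq_add_int_turns (h : InOneTurn θ) (m : ℤ) :
    ∃ θ', InOneTurn θ' ∧ ∑ i, θ' i = ∑ i, θ i + m * (2 * π) ∧
      ∃ σ : Equiv.Perm (Fin (n + 1)), Circle.exp ∘ θ' = Circle.exp ∘ θ ∘ σ := by
  set N : ℕ := m.natAbs
  have hN : 0 ≤ m + (n + 1) * N := by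
    have : -m ≤ N := by omega
    nlinarith [Int.natCast_nonneg N, Int.natCast_nonneg n]
  obtain ⟨θ', h', hsum, σ, hσ⟩ :=
    (h.add_const (-(N * (2 * π)))).exists_sum_eq_add_nat_turns (m + (n + 1) * N).toNat
  refine ⟨θ', h', ?_, σ, ?_⟩
  · have hm : (((m + (n + 1) * N).toNat : ℤ) : ℝ) = m + (n + 1) * N := by
      exact_mod_cast Int.toNat_of_nonneg hN
    rw [hsum, Finset.sum_add_distrib, Finset.sum_const, Finset.card_univ, Fintype.card_fin]
    push_cast at hm ⊢
    rw [hm]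
    ring
  · rw [hσ]
    funext i
    simp

end InOneTurn

lemma exists_inOneTurn_exp_comp_eq {n : ℕ} {f : Fin (n + 1) → Circle} (hf : Injective f) :
    ∃ θ, InOneTurn θ ∧ ∃ σ : Equiv.Perm (Fin (n + 1)), Circle.exp ∘ θ = f ∘ σ := by
  set α : Fin (n + 1) → ℝ := fun i => Complex.arg (f i)
  have hα : Injective α := Circle.injective_arg.comp hf
  refine ⟨α ∘ Tuple.sort α, ⟨?_, ?_⟩, Tuple.sort α, ?_⟩
  · exact (Tuple.monotone_sort α).strictMono_of_injective (hα.comp (Tuple.sort α).injective)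
  · simp only [comp_apply, α]
    linarith [Complex.arg_le_pi (f (Tuple.sort α (Fin.last n))),
      Complex.neg_pi_lt_arg (f (Tuple.sort α 0))]
  · funext i
    exact Circle.exp_arg _

lemma exists_inOneTurn_sum_eq {n : ℕ} {f : Fin (n + 1) → Circle} (hf : Injective f) {s : ℝ}
    (hs : Circle.exp s = ∏ i, f i) :
    ∃ θ, InOneTurn θ ∧ ∑ i, θ i = s ∧ ∃ σ : Equiv.Perm (Fin (n + 1)), Circle.exp ∘ θ = f ∘ σ := by
  obtain ⟨β, hβ, τ, hτ⟩ := exists_inOneTurn_exp_comp_eq hf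
  have : Circle.exp s = Circle.exp (∑ i, β i) := by
    rw [hs, Circle.exp_sum, ← Equiv.prod_comp τ f]
    exact Finset.prod_congr rfl fun i _ => (congrFun hτ i).symm
  obtain ⟨m, hm⟩ := Circle.exp_eq_exp.mp this
  obtain ⟨θ, hθ, hsum, σ, hσ⟩ := hβ.exists_sum_eq_add_int_turns m
  exact ⟨θ, hθ, hsum.trans hm.symm, σ.trans τ, by rw [hσ, ← comp_assoc, hτ]; rfl⟩

section Gaps

variable {n : ℕ}

def gaps (θ : Fin (n + 1) → ℝ) (j : Fin n) : ℝ :=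
  θ j.succ - θ j.castSucc

lemma sum_gaps (θ : Fin (n + 1) → ℝ) : ∑ j, gaps θ j = θ (Fin.last n) - θ 0 := by
  induction n with
  | zero => simp
  | succ n ih =>
    rw [Fin.sum_univ_castSucc]
    have := ih (θ ∘ Fin.castSucc)
    simp only [gaps, comp_apply, Fin.succ_castSucc, Fin.castSucc_zero] at this ⊢
    rw [this, Fin.succ_last]
    ring

lemma inOneTurn_iff_gaps_mem {θ : Fin (n + 1) → ℝ} :
    InOneTurn θ ↔ gaps θ ∈ openSimplex (Fin n) (2 * π) := by
  rw [openSimplex, mem_ofPred_eq, sum_gaps, InOneTurn, Fin.strictMono_iff_lt_succ]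
  simp only [gaps, sub_pos, sub_lt_iff_lt_add']

variable (n) in
def sumGaps : (Fin (n + 1) → ℝ) →ₗ[ℝ] ℝ × (Fin n → ℝ) where
  toFun θ := (∑ i, θ i, gaps θ)
  map_add' θ θ' := by
    ext <;> simp [gaps, Finset.sum_add_distrib]; ring
  map_smul' c θ := by
    ext <;> simp [gaps, Finset.mul_sum]; ring

lemma injective_sumGaps : Injective (sumGaps n) := by
  refine (injective_iff_map_eq_zero _).mpr fun θ hθ => ?_
  simp only [sumGaps, LinearMap.coe_mk, AddHom.coe_mk, Prod.mk_eq_zero] at hθ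
  obtain ⟨hsum, hgaps⟩ := hθ
  have hconst (i : Fin (n + 1)) : θ i = θ 0 := by
    induction i using Fin.induction with
    | zero => rfl
    | succ i ih => rw [← ih, ← sub_eq_zero]; exact congrFun hgaps i
  simp only [hconst, Finset.sum_const, Finset.card_univ, Fintype.card_fin, nsmul_eq_mul] at hsum
  funext i
  rw [hconst, Pi.zero_apply]
  exact (mul_eq_zero.mp hsum).resolve_left (by positivity)

variable (n) in
def sumGapsEquiv : (Fin (n + 1) → ℝ) ≃L[ℝ] ℝ × (Fin n → ℝ) :=
  ((sumGaps n).linearEquivOfInjective injective_sumGaps (by simp [add_comm]))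
    |>.toContinuousLinearEquiv

@[simp]
lemma sumGapsEquiv_apply (θ : Fin (n + 1) → ℝ) : sumGapsEquiv n θ = (∑ i, θ i, gaps θ) :=
  rfl

end Gaps

section ArcChart

variable {n : ℕ} {t : ℝ}

variable (n t) in
def arcTuples : Set (Fin (n + 1) → ℝ) :=
  {θ | InOneTurn θ ∧ ∑ i, θ i ∈ Ioo t (t + 2 * π)}

lemma arcTuples_eq_preimage :
    arcTuples n t = sumGapsEquiv n ⁻¹' Ioo t (t + 2 * π) ×ˢ openSimplex (Fin n) (2 * π) := by
  ext θ
  simp [arcTuples, inOneTurn_iff_gaps_mem, and_comm]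

lemma isOpen_arcTuples : IsOpen (arcTuples n t) :=
  arcTuples_eq_preimage ▸ (isOpen_Ioo.prod isOpen_openSimplex).preimage (sumGapsEquiv n).continuous

variable (n t) in
def arcTuplesHomeomorph : arcTuples n t ≃ₜ ({Circle.exp t}ᶜ : Set Circle) × (Fin n → ℝ) :=
  ((sumGapsEquiv n).toHomeomorph.subtype fun θ => by rw [arcTuples_eq_preimage]; rfl).trans <|
    (Homeomorph.Set.prod _ _).trans <|
      (Circle.arcHomeomorph t).prodCongr (homeomorphOpenSimplex two_pi_pos).symm

def arcTuplesToUConf (θ : arcTuples n t) : UConf Circle (n + 1) :=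
  Quotient.mk _ ⟨Circle.exp ∘ θ.1, θ.2.1.injective_exp⟩

lemma prodPoints_arcTuplesToUConf (θ : arcTuples n t) :
    UConf.prodPoints (arcTuplesToUConf θ) = Circle.exp (∑ i, θ.1 i) :=
  (Circle.exp_sum _ _).symm

lemma continuous_arcTuplesToUConf : Continuous (arcTuplesToUConf (n := n) (t := t)) := by
  refine continuous_quotient_mk'.comp (Continuous.subtype_mk ?_ _)
  exact continuous_pi fun i => Circle.exp.continuous.comp
    ((continuous_apply i).comp continuous_subtype_val)

lemma injective_arcTuplesToUConf : Injective (arcTuplesToUConf (n := n) (t := t)) := by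
  intro θ θ' h
  obtain ⟨σ, hσ⟩ := Quotient.exact h
  obtain ⟨-, h₁, h₂⟩ := θ.2
  obtain ⟨-, h₁', h₂'⟩ := θ'.2
  exact Subtype.ext <| θ'.2.1.eq_of_exp_comp_eq θ.2.1
    (abs_sub_lt_iff.mpr ⟨by linarith, by linarith⟩) σ hσ

lemma isOpenMap_arcTuplesToUConf : IsOpenMap (arcTuplesToUConf (n := n) (t := t)) := by
  have hexp : IsOpenMap fun θ : Fin (n + 1) → ℝ => Circle.exp ∘ θ :=
    IsOpenMap.piMap (fun _ => isLocalHomeomorph_circleExp.isOpenMap)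
      (Filter.Eventually.of_forall fun _ => fun z => ⟨_, Circle.exp_arg z⟩)
  exact OConf.isOpenMap_quotient_mk.comp
    ((hexp.domRestrict isOpen_arcTuples).codRestrict fun θ => θ.2.1.injective_exp)

lemma range_arcTuplesToUConf :
    range (arcTuplesToUConf (n := n) (t := t)) = UConf.prodPoints ⁻¹' {Circle.exp t}ᶜ := by
  ext x
  constructor
  · rintro ⟨θ, rfl⟩
    rw [mem_preimage, prodPoints_arcTuplesToUConf]
    exact (Circle.arcHomeomorph t ⟨_, θ.2.2⟩).2
  · intro hx
    obtain ⟨f, rfl⟩ := Quotient.exists_rep x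
    set s := (Circle.arcHomeomorph t).symm ⟨_, hx⟩
    have hs : Circle.exp s = ∏ i, f.1 i :=
      congrArg Subtype.val ((Circle.arcHomeomorph t).apply_symm_apply _)
    obtain ⟨θ, hθ, hsum, σ, hσ⟩ := exists_inOneTurn_sum_eq f.2 hs
    exact ⟨⟨θ, hθ, hsum ▸ s.2⟩, Quotient.sound ⟨σ, hσ⟩⟩

variable (n t) in
def arcTuplesHomeomorphPreimage :
    arcTuples n t ≃ₜ (UConf.prodPoints : UConf Circle (n + 1) → Circle) ⁻¹' {Circle.exp t}ᶜ :=
  (IsOpenEmbedding.of_continuous_injective_isOpenMap continuous_arcTuplesToUConf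
    injective_arcTuplesToUConf isOpenMap_arcTuplesToUConf).isEmbedding.toHomeomorph.trans
    (Homeomorph.setCongr range_arcTuplesToUConf)

variable (n t) in
def prodPointsPreimageHomeomorph :
    (UConf.prodPoints : UConf Circle (n + 1) → Circle) ⁻¹' {Circle.exp t}ᶜ ≃ₜ
      ({Circle.exp t}ᶜ : Set Circle) × (Fin n → ℝ) :=
  (arcTuplesHomeomorphPreimage n t).symm.trans (arcTuplesHomeomorph n t)

lemma coe_prodPointsPreimageHomeomorph_fst
    (z : (UConf.prodPoints : UConf Circle (n + 1) → Circle) ⁻¹' {Circle.exp t}ᶜ) :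
    ((prodPointsPreimageHomeomorph n t z).1 : Circle) = UConf.prodPoints z.1 := by
  have hz : arcTuplesToUConf ((arcTuplesHomeomorphPreimage n t).symm z) = z.1 :=
    congrArg Subtype.val ((arcTuplesHomeomorphPreimage n t).apply_symm_apply z)
  rw [← hz, prodPoints_arcTuplesToUConf]
  rfl

end ArcChart

/-- for `p ≥ 1` the configuration space `B(S¹, p)` of unordered `p`-element
subsets of the circle is the total space of a locally trivial fiber bundle over `S¹` whose
fiber is (homeomorphic to) `ℝ^(p-1)`. -/
theorem statement0 (p : ℕ) (hp : 1 ≤ p) :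
    ∃ proj : UConf Circle p → Circle, Continuous proj ∧
      ∀ b : Circle, ∃ e : Bundle.Trivialization (Fin (p - 1) → ℝ) proj, b ∈ e.baseSet := by
  obtain ⟨n, rfl⟩ : ∃ n, p = n + 1 := ⟨p - 1, by omega⟩
  refine ⟨UConf.prodPoints, UConf.continuous_prodPoints, fun b => ?_⟩
  have hb : b ∈ ({Circle.exp (Complex.arg b - π)}ᶜ : Set Circle) := by
    have harg : Complex.arg b ∈ Ioo (Complex.arg b - π) (Complex.arg b - π + 2 * π) :=
      ⟨by linarith [pi_pos], by linarith [pi_pos]⟩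
    simpa [Circle.coe_arcHomeomorph, Circle.exp_arg] using (Circle.arcHomeomorph _ ⟨_, harg⟩).2
  obtain ⟨e, he⟩ := Bundle.Trivialization.exists_baseSet_eq_of_homeomorph
    UConf.continuous_prodPoints isOpen_compl_singleton ⟨b, hb⟩
    (prodPointsPreimageHomeomorph n _) coe_prodPointsPreimageHomeomorph_fst
  exact ⟨e, he ▸ hb⟩
end
end

section
/- Fix degrees d₁ ≥ ⋯ ≥ d_n and p distinct lines through the origin in ℝ². The set of systems (f₁,…,f_n) of real homogeneous polynomials of degrees d₁,…,d_n vanishing on all p given lines is a linear subspace of ℝ^D of codimension exactly N(p), where N(p) = Σᵢ min(d_i + 1, p), provided p ≤ d₁. -/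
set_option maxHeartbeats 1000000


/-- The binary form of degree `d` with coefficients `a`, evaluated at `v ∈ ℝ²`. -/
def evalForm (d : ℕ) (a : Fin (d + 1) → ℝ) (v : ℝ × ℝ) : ℝ :=
  ∑ i : Fin (d + 1), a i * v.1 ^ (d - (i : ℕ)) * v.2 ^ (i : ℕ)

noncomputable section Aux

open Finset MvPolynomial

/-- `evalForm` as a linear map in the coefficient vector. -/
def evalL (d : ℕ) (w : ℝ × ℝ) : (Fin (d + 1) → ℝ) →ₗ[ℝ] ℝ where
  toFun a := evalForm d a w
  map_add' a b := by
    simp only [evalForm, Pi.add_apply, add_mul, Finset.sum_add_distrib]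
  map_smul' c a := by
    simp only [evalForm, Pi.smul_apply, smul_eq_mul, RingHom.id_apply, Finset.mul_sum]
    exact Finset.sum_congr rfl fun i _ => by ring

@[simp] lemma evalL_apply (d : ℕ) (w : ℝ × ℝ) (a : Fin (d + 1) → ℝ) :
    evalL d w a = evalForm d a w := rfl

lemma evalForm_smul (d : ℕ) (a : Fin (d + 1) → ℝ) (t : ℝ) (w : ℝ × ℝ) :
    evalForm d a (t • w) = t ^ d * evalForm d a w := by
  unfold evalForm
  rw [Finset.mul_sum]
  refine Finset.sum_congr rfl fun i _ => ?_
  have hi : (i : ℕ) ≤ d := Nat.lt_succ_iff.mp i.isLt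
  have h1 : (t • w).1 = t * w.1 := rfl
  have h2 : (t • w).2 = t * w.2 := rfl
  have ht : t ^ (d - (i : ℕ)) * t ^ (i : ℕ) = t ^ d := by
    rw [← pow_add, Nat.sub_add_cancel hi]
  rw [h1, h2, mul_pow, mul_pow, ← ht]
  ring

lemma cross_ne (w z : ℝ × ℝ) (hw : w ≠ 0) (h : ∀ c : ℝ, z ≠ c • w) :
    z.2 * w.1 - z.1 * w.2 ≠ 0 := by
  intro hc
  rcases eq_or_ne w.1 0 with h1 | h1
  · have h2 : w.2 ≠ 0 := fun h2 => hw (Prod.ext_iff.mpr ⟨h1, h2⟩)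
    have hz1 : z.1 = 0 := by
      rw [h1] at hc
      have : z.1 * w.2 = 0 := by linarith
      rcases mul_eq_zero.mp this with h | h
      · exact h
      · exact absurd h h2
    refine h (z.2 / w.2) ?_
    refine Prod.ext_iff.mpr ⟨?_, ?_⟩
    · show z.1 = (z.2 / w.2) * w.1
      rw [hz1, h1, mul_zero]
    · show z.2 = (z.2 / w.2) * w.2
      field_simp
  · refine h (z.1 / w.1) ?_
    refine Prod.ext_iff.mpr ⟨?_, ?_⟩
    · show z.1 = (z.1 / w.1) * w.1
      field_simp
    · show z.2 = (z.1 / w.1) * w.2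
      field_simp
      nlinarith [hc]

/-- For a homogeneous polynomial `G` of degree `d` in two variables, the binary form
whose coefficients are the coefficients of `G` evaluates to `G`. -/
lemma evalForm_coeff (d : ℕ) (G : MvPolynomial (Fin 2) ℝ) (hG : G.IsHomogeneous d)
    (w : ℝ × ℝ) :
    evalForm d
      (fun i => MvPolynomial.coeff
        (Finsupp.single 0 (d - (i : ℕ)) + Finsupp.single 1 (i : ℕ)) G) w
      = MvPolynomial.eval ![w.1, w.2] G := by
  classical
  set m : Fin (d + 1) → (Fin 2 →₀ ℕ) :=
    fun i => Finsupp.single 0 (d - (i : ℕ)) + Finsupp.single 1 (i : ℕ) with hm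
  have hm0 : ∀ i, (m i) 0 = d - (i : ℕ) := by
    intro i; simp [hm, Finsupp.single_apply]
  have hm1 : ∀ i, (m i) 1 = (i : ℕ) := by
    intro i; simp [hm, Finsupp.single_apply]
  have hminj : Function.Injective m := by
    intro i i' h
    have := congrArg (fun f => f 1) h
    simp only [hm1] at this
    exact Fin.ext this
  have hsub : G.support ⊆ Finset.univ.image m := by
    intro e he
    have hcoeff : MvPolynomial.coeff e G ≠ 0 := MvPolynomial.mem_support_iff.mp he
    have hdeg : e.degree = d := by
      by_contra hne
      exact hcoeff (hG.coeff_eq_zero hne)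
    have hsum : e 0 + e 1 = d := by
      have : e.degree = ∑ b : Fin 2, e b := by
        rw [Finsupp.degree]
        refine Finset.sum_subset (Finset.subset_univ _) ?_
        intro b _ hb
        exact Finsupp.notMem_support_iff.mp hb
      rw [this, Fin.sum_univ_two] at hdeg
      exact hdeg
    have he1 : e 1 ≤ d := by omega
    refine Finset.mem_image.mpr ⟨⟨e 1, by omega⟩, Finset.mem_univ _, ?_⟩
    ext b
    fin_cases b <;> simp [hm, Finsupp.single_apply] <;> omega
  rw [MvPolynomial.eval_eq']
  rw [Finset.sum_subset hsub (fun e _ he => by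
    rw [MvPolynomial.notMem_support_iff.mp he, zero_mul])]
  rw [Finset.sum_image (fun i _ i' _ h => hminj h)]
  unfold evalForm
  refine Finset.sum_congr rfl fun i _ => ?_
  rw [Fin.prod_univ_two]
  simp only [Matrix.cons_val_zero, Matrix.cons_val_one, Matrix.head_cons, hm0, hm1]
  ring

/-- Evaluation of a binary form of degree `d` at `p` pairwise non-proportional nonzero
vectors has rank `min (d+1) p`. -/
lemma rank_eval (d p : ℕ) (v : Fin p → ℝ × ℝ) (hv0 : ∀ j, v j ≠ 0)
    (hvind : ∀ j k, j ≠ k → ∀ c : ℝ, v k ≠ c • v j) :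
    Module.finrank ℝ
      ↥(LinearMap.range (LinearMap.pi fun j : Fin p => evalL d (v j))) = min (d + 1) p := by
  classical
  set E : (Fin (d + 1) → ℝ) →ₗ[ℝ] (Fin p → ℝ) :=
    LinearMap.pi fun j : Fin p => evalL d (v j) with hE
  have hub1 : Module.finrank ℝ ↥(LinearMap.range E) ≤ d + 1 :=
    E.finrank_range_le.trans_eq (Module.finrank_fin_fun ℝ)
  have hub2 : Module.finrank ℝ ↥(LinearMap.range E) ≤ p :=
    (Submodule.finrank_le _).trans_eq (Module.finrank_fin_fun ℝ)
  set q : ℕ := min (d + 1) p with hq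
  have hqp : q ≤ p := min_le_right _ _
  have hqd : q ≤ d + 1 := min_le_left _ _
  set u : Fin q → ℝ × ℝ := fun k => v (Fin.castLE hqp k) with hu
  -- for each j, a form nonvanishing at `u j` and vanishing at all other `u k`
  have key : ∀ j : Fin q, ∃ a : Fin (d + 1) → ℝ,
      evalForm d a (u j) ≠ 0 ∧ ∀ k : Fin q, k ≠ j → evalForm d a (u k) = 0 := by
    intro j
    have hq1 : 1 ≤ q := j.pos
    set G : MvPolynomial (Fin 2) ℝ :=
      (∏ k ∈ Finset.univ.erase j,
        (MvPolynomial.C (u k).2 * MvPolynomial.X 0 - MvPolynomial.C (u k).1 * MvPolynomial.X 1))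
      * (MvPolynomial.C (u j).1 * MvPolynomial.X 0
          + MvPolynomial.C (u j).2 * MvPolynomial.X 1) ^ (d + 1 - q) with hGdef
    have hlin : ∀ c₁ c₂ : ℝ, MvPolynomial.IsHomogeneous
        (MvPolynomial.C c₁ * MvPolynomial.X 0 + MvPolynomial.C c₂ *
          MvPolynomial.X (1 : Fin 2)) 1 := by
      intro c₁ c₂
      have := ((isHomogeneous_X ℝ (0 : Fin 2)).C_mul c₁).add
        ((isHomogeneous_X ℝ (1 : Fin 2)).C_mul c₂)
      exact this
    have hlin' : ∀ c₁ c₂ : ℝ, MvPolynomial.IsHomogeneous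
        (MvPolynomial.C c₁ * MvPolynomial.X 0 - MvPolynomial.C c₂ *
          MvPolynomial.X (1 : Fin 2)) 1 := by
      intro c₁ c₂
      exact ((isHomogeneous_X ℝ (0 : Fin 2)).C_mul c₁).sub
        ((isHomogeneous_X ℝ (1 : Fin 2)).C_mul c₂)
    have hcard : (Finset.univ.erase j).card = q - 1 := by
      rw [Finset.card_erase_of_mem (Finset.mem_univ j), Finset.card_univ, Fintype.card_fin]
    have hGhom : G.IsHomogeneous d := by
      have hprod : MvPolynomial.IsHomogeneous
          (∏ k ∈ Finset.univ.erase j,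
            (MvPolynomial.C (u k).2 * MvPolynomial.X (0 : Fin 2)
              - MvPolynomial.C (u k).1 * MvPolynomial.X 1) : MvPolynomial (Fin 2) ℝ) (q - 1) := by
        have := MvPolynomial.IsHomogeneous.prod (Finset.univ.erase j)
          (fun k => MvPolynomial.C (u k).2 * MvPolynomial.X (0 : Fin 2)
            - MvPolynomial.C (u k).1 * MvPolynomial.X 1) (fun _ => 1)
          (fun k _ => hlin' (u k).2 (u k).1)
        simpa [hcard] using this
      have hpow : MvPolynomial.IsHomogeneous
          ((MvPolynomial.C (u j).1 * MvPolynomial.X (0 : Fin 2)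
            + MvPolynomial.C (u j).2 * MvPolynomial.X 1) ^ (d + 1 - q) : MvPolynomial (Fin 2) ℝ) (d + 1 - q) := by
        simpa [mul_one] using (hlin (u j).1 (u j).2).pow (d + 1 - q)
      have := hprod.mul hpow
      have harith : (q - 1) + (d + 1 - q) = d := by omega
      rw [harith] at this
      exact this
    have heval : ∀ w : ℝ × ℝ, MvPolynomial.eval ![w.1, w.2] G =
        (∏ k ∈ Finset.univ.erase j, ((u k).2 * w.1 - (u k).1 * w.2))
        * ((u j).1 * w.1 + (u j).2 * w.2) ^ (d + 1 - q) := by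
      intro w
      simp [hGdef]
    refine ⟨fun i => MvPolynomial.coeff
      (Finsupp.single 0 (d - (i : ℕ)) + Finsupp.single 1 (i : ℕ)) G, ?_, ?_⟩
    · rw [evalForm_coeff d G hGhom, heval]
      refine mul_ne_zero ?_ ?_
      · rw [Finset.prod_ne_zero_iff]
        intro k hk
        have hkj : k ≠ j := Finset.ne_of_mem_erase hk
        have hne : Fin.castLE hqp k ≠ Fin.castLE hqp j :=
          fun h => hkj (Fin.castLE_injective hqp h)
        exact cross_ne (u j) (u k) (hv0 _) (hvind _ _ hne.symm)
      · refine pow_ne_zero _ ?_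
        have : (u j).1 * (u j).1 + (u j).2 * (u j).2 ≠ 0 := by
          intro h
          have h1 : (u j).1 = 0 := by nlinarith
          have h2 : (u j).2 = 0 := by nlinarith
          exact hv0 _ (Prod.ext_iff.mpr ⟨h1, h2⟩)
        intro h; exact this (by nlinarith)
    · intro k hk
      rw [evalForm_coeff d G hGhom, heval]
      have : ∏ k' ∈ Finset.univ.erase j, ((u k').2 * (u k).1 - (u k').1 * (u k).2) = 0 :=
        Finset.prod_eq_zero (Finset.mem_erase.mpr ⟨hk, Finset.mem_univ _⟩) (by ring)
      rw [this, zero_mul]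
  -- surjectivity of the restriction to the first q lines
  set π : (Fin p → ℝ) →ₗ[ℝ] (Fin q → ℝ) := LinearMap.funLeft ℝ ℝ (Fin.castLE hqp) with hπ
  have hsurj : Function.Surjective (π.comp E) := by
    intro x
    choose b hb0 hb using key
    refine ⟨∑ j : Fin q, (x j / evalForm d (b j) (u j)) • b j, ?_⟩
    funext k
    have hcomp : (π.comp E) (∑ j : Fin q, (x j / evalForm d (b j) (u j)) • b j) k =
        evalL d (u k) (∑ j : Fin q, (x j / evalForm d (b j) (u j)) • b j) := rfl
    rw [hcomp, map_sum]
    rw [Finset.sum_eq_single k]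
    · simp only [map_smul, evalL_apply, smul_eq_mul]
      exact div_mul_cancel₀ (x k) (hb0 k)
    · intro j _ hj
      simp only [map_smul, evalL_apply, smul_eq_mul]
      rw [hb j k hj.symm, mul_zero]
    · intro h; exact absurd (Finset.mem_univ k) h
  have hlb : q ≤ Module.finrank ℝ ↥(LinearMap.range E) := by
    have htop : LinearMap.range (π.comp E) = ⊤ := LinearMap.range_eq_top.mpr hsurj
    have h1 : Module.finrank ℝ ↥(LinearMap.range (π.comp E)) = q := by
      rw [htop, finrank_top, Module.finrank_fin_fun]
    have h2 : LinearMap.range (π.comp E) = (LinearMap.range E).map π :=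
      LinearMap.range_comp _ _
    rw [h2] at h1
    calc q = Module.finrank ℝ ↥((LinearMap.range E).map π) := h1.symm
      _ ≤ Module.finrank ℝ ↥(LinearMap.range E) := Submodule.finrank_map_le π _
  exact le_antisymm (le_min hub1 hub2) hlb

end Aux

/-- given degrees `d 0 ≥ ⋯ ≥ d (n-1)` and `p ≤ d 0` distinct lines through the
origin of `ℝ²` (spanned by pairwise non-proportional nonzero vectors `v j`), the set of systems
of real binary forms of degrees `d i` vanishing on all `p` lines is a linear subspace of
`ℝ^D` of codimension exactly `N(p) = ∑ i, min (d i + 1) p`. -/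
theorem statement14 (n p : ℕ) (hn : 0 < n) (d : Fin n → ℕ) (hd : Antitone d)
    (hp : p ≤ d ⟨0, hn⟩) (v : Fin p → ℝ × ℝ) (hv0 : ∀ j, v j ≠ 0)
    (hvind : ∀ j k, j ≠ k → ∀ c : ℝ, v k ≠ c • v j) :
    ∃ V : Submodule ℝ ((i : Fin n) → Fin (d i + 1) → ℝ),
      (V : Set ((i : Fin n) → Fin (d i + 1) → ℝ)) =
        {a | ∀ (i : Fin n) (j : Fin p) (t : ℝ), evalForm (d i) (a i) (t • v j) = 0} ∧
      Module.finrank ℝ (((i : Fin n) → Fin (d i + 1) → ℝ) ⧸ V) =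
        ∑ i : Fin n, min (d i + 1) p := by
  classical
  set Ei : (i : Fin n) → ((Fin (d i + 1) → ℝ) →ₗ[ℝ] (Fin p → ℝ)) :=
    fun i => LinearMap.pi fun j : Fin p => evalL (d i) (v j) with hEi
  set E : ((i : Fin n) → Fin (d i + 1) → ℝ) →ₗ[ℝ] ((i : Fin n) → Fin p → ℝ) :=
    LinearMap.pi (fun i => (Ei i).comp (LinearMap.proj i)) with hE
  have hmem : ∀ a, a ∈ LinearMap.ker E ↔
      ∀ (i : Fin n) (j : Fin p), evalForm (d i) (a i) (v j) = 0 := by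
    intro a
    rw [LinearMap.mem_ker]
    constructor
    · intro h i j
      have := congrFun (congrFun h i) j
      exact this
    · intro h
      funext i j
      exact h i j
  refine ⟨LinearMap.ker E, ?_, ?_⟩
  · ext a
    simp only [SetLike.mem_coe, Set.mem_setOf_eq, hmem]
    constructor
    · intro h i j t
      rw [evalForm_smul, h i j, mul_zero]
    · intro h i j
      have := h i j 1
      rwa [one_smul] at this
  · have hker : LinearMap.ker E =
        Submodule.pi Set.univ (fun i => LinearMap.ker (Ei i)) := by
      ext a
      rw [hmem, Submodule.mem_pi]
      constructor
      · intro h i _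
        rw [LinearMap.mem_ker]
        funext j
        exact h i j
      · intro h i j
        have := h i (Set.mem_univ i)
        rw [LinearMap.mem_ker] at this
        exact congrFun this j
    rw [hker, LinearEquiv.finrank_eq (Submodule.quotientPi _),
      Module.finrank_pi_fintype ℝ]
    refine Finset.sum_congr rfl fun i _ => ?_
    rw [LinearEquiv.finrank_eq (Ei i).quotKerEquivRange]
    exact rank_eval (d i) p v hv0 hvind
end
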